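/- arXiv:2403.18015 — 3 statements merged into one kernel-verified Lean document; each statement's English description precedes it below -/
import Mathlib

section
/- Under the hypotheses of the previous statement (P, Q positive definite, Riccati identity, feedback π(ξ) = −½ R⁻¹BᵀPξ), for all ξ and w one has ⟨∇V(ξ), Aξ + Bπ(ξ) + w⟩ ≤ −½ ξᵀQξ − ½ (‖Pξ‖/γ − γ‖w‖)² + ½ γ²‖w‖². In particular ⟨∇V(ξ), Aξ + Bπ(ξ) + w⟩ ≤ −½ λ_min(Q)‖ξ‖² + ½ γ²‖w‖², where λ_min(Q) is the smallest eigenvalue of Q. -/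
/-!
Testing the Riccati identity against `ξ` on both sides, the feedback `π` turns
`⟪Pξ, Aξ + Bπ(ξ)⟫` into `-½ ξᵀQξ - ‖Pξ‖² / (2γ²)`. The disturbance term `⟪Pξ, w⟫` is bounded by
Cauchy–Schwarz, and completing the square in `‖Pξ‖` and `‖w‖` gives the first bound; dropping the
square and using `λ_min(Q) ‖ξ‖² ≤ ξᵀQξ` (the matrix `Q - λ_min(Q) • 1` has nonnegative spectrum)
gives the second.
-/

open Matrix RealInnerProductSpace

noncomputable def toE {n : ℕ} (x : Fin n → ℝ) : EuclideanSpace ℝ (Fin n) :=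
  (WithLp.equiv 2 (Fin n → ℝ)).symm x

namespace Matrix

variable {n m R : Type*} [Fintype n] [Fintype m]

lemma IsHermitian.posSemidef_sub_iInf_eigenvalues_smul_one [DecidableEq n] {A : Matrix n n ℝ}
    (hA : A.IsHermitian) : (A - (⨅ i, hA.eigenvalues i) • (1 : Matrix n n ℝ)).PosSemidef := by
  set c := ⨅ i, hA.eigenvalues i
  have hc : c • (1 : Matrix n n ℝ) = algebraMap ℝ _ c := (Algebra.algebraMap_eq_smul_one c).symm
  refine posSemidef_iff_isHermitian_and_spectrum_nonneg.mpr
    ⟨hA.sub (isHermitian_one.smul (IsSelfAdjoint.all c)), ?_⟩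
  rw [hc, ← spectrum.sub_singleton_eq, hA.spectrum_real_eq_range_eigenvalues]
  rintro _ ⟨_, ⟨i, rfl⟩, _, rfl, rfl⟩
  exact sub_nonneg.mpr (ciInf_le (Finite.bddBelow_range hA.eigenvalues) i)

lemma IsHermitian.iInf_eigenvalues_mul_dotProduct_self_le [DecidableEq n] {A : Matrix n n ℝ}
    (hA : A.IsHermitian) (x : n → ℝ) :
    (⨅ i, hA.eigenvalues i) * (x ⬝ᵥ x) ≤ x ⬝ᵥ A *ᵥ x := by
  have := hA.posSemidef_sub_iInf_eigenvalues_smul_one.dotProduct_mulVec_nonneg x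
  simp only [star_trivial, sub_mulVec, smul_mulVec, one_mulVec, dotProduct_sub,
    dotProduct_smul, smul_eq_mul] at this
  linarith

variable [CommRing R]

lemma dotProduct_mul_mulVec_of_isSymm {P : Matrix n n R} (hP : P.IsSymm) (K : Matrix n n R)
    (x : n → R) : x ⬝ᵥ (P * K) *ᵥ x = P *ᵥ x ⬝ᵥ K *ᵥ x := by
  rw [← mulVec_mulVec, dotProduct_mulVec, ← mulVec_transpose, hP.eq]

lemma dotProduct_transpose_mul_mulVec (K P : Matrix n n R) (x : n → R) :
    x ⬝ᵥ (Kᵀ * P) *ᵥ x = P *ᵥ x ⬝ᵥ K *ᵥ x := by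
  rw [← mulVec_mulVec, dotProduct_mulVec, vecMul_transpose, dotProduct_comm]

lemma dotProduct_mulVec_closedLoop_of_riccati {P Q A : Matrix n n ℝ} {B : Matrix n m ℝ}
    {S : Matrix m m ℝ} {c : ℝ} (hP : P.IsSymm)
    (hRic : P * A + Aᵀ * P - P * B * S * Bᵀ * P = -Q - c • (P * P)) (x : n → ℝ) :
    P *ᵥ x ⬝ᵥ (A *ᵥ x + B *ᵥ ((-(1 / 2) : ℝ) • (S * Bᵀ * P) *ᵥ x)) =
      -(1 / 2) * (x ⬝ᵥ Q *ᵥ x) - c / 2 * (P *ᵥ x ⬝ᵥ P *ᵥ x) := by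
  have hquad := congrArg (fun M ↦ x ⬝ᵥ M *ᵥ x) hRic
  simp only [show P * B * S * Bᵀ * P = P * (B * (S * Bᵀ * P)) by simp only [Matrix.mul_assoc],
    sub_mulVec, add_mulVec, neg_mulVec, smul_mulVec, dotProduct_sub, dotProduct_add,
    dotProduct_neg, dotProduct_smul, smul_eq_mul, dotProduct_mul_mulVec_of_isSymm hP,
    dotProduct_transpose_mul_mulVec] at hquad
  rw [mulVec_smul, mulVec_mulVec, dotProduct_add, dotProduct_smul, smul_eq_mul]
  linarith

end Matrix

lemma inner_toE_toE {n : ℕ} (u v : Fin n → ℝ) : ⟪toE u, toE v⟫ = u ⬝ᵥ v := by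
  rw [EuclideanSpace.inner_eq_star_dotProduct, star_trivial, dotProduct_comm]
  rfl

lemma norm_toE_sq {n : ℕ} (u : Fin n → ℝ) : ‖toE u‖ ^ 2 = u ⬝ᵥ u := by
  rw [← real_inner_self_eq_norm_sq, inner_toE_toE]

lemma neg_sq_div_add_mul_eq {γ : ℝ} (hγ : γ ≠ 0) (a b : ℝ) :
    -(a ^ 2 / (2 * γ ^ 2)) + a * b = -(1 / 2) * (a / γ - γ * b) ^ 2 + (1 / 2) * γ ^ 2 * b ^ 2 := by
  field_simp
  ring

theorem stmt1_general {n m : ℕ}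
    (P Q A : Matrix (Fin n) (Fin n) ℝ) (R : Matrix (Fin m) (Fin m) ℝ)
    (B : Matrix (Fin n) (Fin m) ℝ) (γ : ℝ)
    (hP : P.PosDef) (hQ : Q.PosDef) (hγ : 0 < γ)
    (hRic : P * A + Aᵀ * P - P * B * R⁻¹ * Bᵀ * P = -Q - (γ ^ 2)⁻¹ • (P * P))
    (π : EuclideanSpace ℝ (Fin n) → Fin m → ℝ)
    (hπ : ∀ ξ, π ξ = (-(1 / 2) : ℝ) • (R⁻¹ * Bᵀ * P).mulVec ξ) :
    ∀ ξ w : EuclideanSpace ℝ (Fin n),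
      (⟪toE (P.mulVec ξ), toE (A.mulVec ξ + B.mulVec (π ξ)) + w⟫ ≤
          -(1 / 2) * ⟪ξ, toE (Q.mulVec ξ)⟫
            - (1 / 2) * (‖toE (P.mulVec ξ)‖ / γ - γ * ‖w‖) ^ 2
            + (1 / 2) * γ ^ 2 * ‖w‖ ^ 2) ∧
      (⟪toE (P.mulVec ξ), toE (A.mulVec ξ + B.mulVec (π ξ)) + w⟫ ≤
          -(1 / 2) * (⨅ i, hQ.1.eigenvalues i) * ‖ξ‖ ^ 2
            + (1 / 2) * γ ^ 2 * ‖w‖ ^ 2) := by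
  intro ξ w
  have hQξ : ⟪ξ, toE (Q.mulVec ξ)⟫ = ξ.ofLp ⬝ᵥ Q *ᵥ ξ.ofLp := inner_toE_toE _ _
  have hdecay : ⟪toE (P.mulVec ξ), toE (A.mulVec ξ + B.mulVec (π ξ))⟫ =
      -(1 / 2) * ⟪ξ, toE (Q.mulVec ξ)⟫ - ‖toE (P.mulVec ξ)‖ ^ 2 / (2 * γ ^ 2) := by
    rw [inner_toE_toE, hπ, hQξ, norm_toE_sq,
      dotProduct_mulVec_closedLoop_of_riccati (isHermitian_iff_isSymm.mp hP.isHermitian) hRic]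
    ring
  have hcs := real_inner_le_norm (toE (P.mulVec ξ)) w
  have hsquare := neg_sq_div_add_mul_eq hγ.ne' ‖toE (P.mulVec ξ)‖ ‖w‖
  have hbound : ⟪toE (P.mulVec ξ), toE (A.mulVec ξ + B.mulVec (π ξ)) + w⟫ ≤
      -(1 / 2) * ⟪ξ, toE (Q.mulVec ξ)⟫
        - (1 / 2) * (‖toE (P.mulVec ξ)‖ / γ - γ * ‖w‖) ^ 2 + (1 / 2) * γ ^ 2 * ‖w‖ ^ 2 := by
    rw [inner_add_right, hdecay]
    linarith
  refine ⟨hbound, hbound.trans ?_⟩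
  have heig : (⨅ i, hQ.1.eigenvalues i) * ‖ξ‖ ^ 2 ≤ ⟪ξ, toE (Q.mulVec ξ)⟫ := by
    rw [hQξ, show ‖ξ‖ = ‖toE ξ.ofLp‖ from rfl, norm_toE_sq]
    exact hQ.isHermitian.iInf_eigenvalues_mul_dotProduct_self_le ξ.ofLp
  nlinarith [sq_nonneg (‖toE (P.mulVec ξ)‖ / γ - γ * ‖w‖)]

/-- completed-square form of the ISS-CLF bound, and the eigenvalue bound. -/
theorem stmt1 {n m : ℕ} (hn : 0 < n)
    (P Q A : Matrix (Fin n) (Fin n) ℝ) (R : Matrix (Fin m) (Fin m) ℝ)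
    (B : Matrix (Fin n) (Fin m) ℝ) (γ : ℝ)
    (hP : P.PosDef) (hQ : Q.PosDef) (hR : R.PosDef) (hγ : 0 < γ)
    (hRic : P * A + Aᵀ * P - P * B * R⁻¹ * Bᵀ * P = -Q - (γ ^ 2)⁻¹ • (P * P))
    (V : EuclideanSpace ℝ (Fin n) → ℝ)
    (hV : ∀ ξ, V ξ = (1 / 2) * ⟪ξ, toE (P.mulVec ξ)⟫)
    (π : EuclideanSpace ℝ (Fin n) → Fin m → ℝ)
    (hπ : ∀ ξ, π ξ = (-(1 / 2) : ℝ) • (R⁻¹ * Bᵀ * P).mulVec ξ) :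
    ∀ ξ w : EuclideanSpace ℝ (Fin n),
      (⟪toE (P.mulVec ξ), toE (A.mulVec ξ + B.mulVec (π ξ)) + w⟫ ≤
          -(1 / 2) * ⟪ξ, toE (Q.mulVec ξ)⟫
            - (1 / 2) * (‖toE (P.mulVec ξ)‖ / γ - γ * ‖w‖) ^ 2
            + (1 / 2) * γ ^ 2 * ‖w‖ ^ 2) ∧
      (⟪toE (P.mulVec ξ), toE (A.mulVec ξ + B.mulVec (π ξ)) + w⟫ ≤
          -(1 / 2) * (⨅ i, hQ.1.eigenvalues i) * ‖ξ‖ ^ 2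
            + (1 / 2) * γ ^ 2 * ‖w‖ ^ 2) :=
  stmt1_general P Q A R B γ hP hQ hγ hRic π hπ
end

section
/- Let V : ℝⁿ → ℝ be continuously differentiable, and let ξ : [t₀, t₁] → ℝⁿ be a solution of an ODE ξ' = F(t, ξ) such that whenever V(ξ(t)) ≥ c (for a fixed constant c), the derivative d/dt V(ξ(t)) ≤ 0. If V(ξ(t₀)) ≤ c, then V(ξ(t)) ≤ c for all t ∈ [t₀, t₁]. (Sublevel-set invariance.) -/
/-!
If `V ∘ ξ` exceeded `c` at some time `t`, take the last time `s < t` with `V (ξ s) ≤ c`.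
On `(s, t]` the trajectory stays above the level `c`, so `V ∘ ξ` is nonincreasing there and
`V (ξ t) ≤ V (ξ s) ≤ c`, a contradiction.
-/

open Set

theorem ContinuousOn.exists_last_le_of_lt {g : ℝ → ℝ} {a b c : ℝ} (hab : a ≤ b)
    (hg : ContinuousOn g (Icc a b)) (ha : g a ≤ c) (hb : c < g b) :
    ∃ s ∈ Ico a b, g s ≤ c ∧ ∀ y ∈ Ioc s b, c < g y := by
  set S : Set ℝ := Icc a b ∩ g ⁻¹' Iic c
  have hS_closed : IsClosed S := hg.preimage_isClosed_of_isClosed isClosed_Icc isClosed_Iic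
  have hS_bdd : BddAbove S := ⟨b, fun y hy => hy.1.2⟩
  obtain ⟨⟨has, hsb⟩, hs⟩ : sSup S ∈ S :=
    hS_closed.csSup_mem ⟨a, ⟨le_rfl, hab⟩, ha⟩ hS_bdd
  refine ⟨sSup S, ⟨has, hsb.lt_of_ne ?_⟩, hs, fun y hy => ?_⟩
  · rintro hsb
    exact hb.not_ge (hsb ▸ hs)
  · by_contra! hy_le
    exact hy.1.not_ge (le_csSup hS_bdd ⟨⟨has.trans hy.1.le, hy.2⟩, hy_le⟩)

theorem image_le_of_deriv_nonpos_of_le_of_ge {g : ℝ → ℝ} {a b c : ℝ}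
    (hg : ContinuousOn g (Icc a b)) (hg' : DifferentiableOn ℝ g (Ioo a b))
    (hderiv : ∀ x ∈ Ioo a b, c ≤ g x → deriv g x ≤ 0) (ha : g a ≤ c) :
    ∀ x ∈ Icc a b, g x ≤ c := by
  intro x hx
  by_contra! hcx
  obtain ⟨s, ⟨has, hsx⟩, hs, habove⟩ :=
    (hg.mono (Icc_subset_Icc_right hx.2)).exists_last_le_of_lt hx.1 ha hcx
  have hsub : Icc s x ⊆ Icc a b := Icc_subset_Icc has hx.2
  have hanti : AntitoneOn g (Icc s x) := by
    refine antitoneOn_of_deriv_nonpos (convex_Icc s x) (hg.mono hsub) ?_ ?_ <;>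
      rw [interior_Icc]
    · exact hg'.mono (Ioo_subset_Ioo has hx.2)
    · exact fun y hy => hderiv y (Ioo_subset_Ioo has hx.2 hy) (habove y ⟨hy.1, hy.2.le⟩).le
  exact hcx.not_ge ((hanti ⟨le_rfl, hsx.le⟩ ⟨hsx.le, le_rfl⟩ hsx.le).trans hs)

theorem stmt4_general {n : ℕ}
    (V : EuclideanSpace ℝ (Fin n) → ℝ) (hV : ContDiff ℝ 1 V)
    (t₀ t₁ c : ℝ)
    (F : ℝ → EuclideanSpace ℝ (Fin n) → EuclideanSpace ℝ (Fin n))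
    (ξ : ℝ → EuclideanSpace ℝ (Fin n))
    (hode : ∀ t ∈ Icc t₀ t₁, HasDerivAt ξ (F t (ξ t)) t)
    (hdec : ∀ t ∈ Icc t₀ t₁, c ≤ V (ξ t) → deriv (fun s => V (ξ s)) t ≤ 0)
    (h0 : V (ξ t₀) ≤ c) :
    ∀ t ∈ Icc t₀ t₁, V (ξ t) ≤ c := by
  have hdiff : ∀ t ∈ Icc t₀ t₁, DifferentiableAt ℝ (fun s => V (ξ s)) t := fun t ht =>
    (hV.differentiable one_ne_zero (ξ t)).comp t (hode t ht).differentiableAt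
  exact image_le_of_deriv_nonpos_of_le_of_ge
    (fun t ht => (hdiff t ht).continuousAt.continuousWithinAt)
    (fun t ht => (hdiff t (Ioo_subset_Icc_self ht)).differentiableWithinAt)
    (fun t ht => hdec t (Ioo_subset_Icc_self ht)) h0

/-- sublevel-set invariance along solutions of an ODE. -/
theorem stmt4 {n : ℕ}
    (V : EuclideanSpace ℝ (Fin n) → ℝ) (hV : ContDiff ℝ 1 V)
    (t₀ t₁ c : ℝ) (ht : t₀ ≤ t₁)
    (F : ℝ → EuclideanSpace ℝ (Fin n) → EuclideanSpace ℝ (Fin n))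
    (ξ : ℝ → EuclideanSpace ℝ (Fin n))
    (hode : ∀ t ∈ Icc t₀ t₁, HasDerivAt ξ (F t (ξ t)) t)
    (hdec : ∀ t ∈ Icc t₀ t₁, c ≤ V (ξ t) → deriv (fun s => V (ξ s)) t ≤ 0)
    (h0 : V (ξ t₀) ≤ c) :
    ∀ t ∈ Icc t₀ t₁, V (ξ t) ≤ c :=
  stmt4_general V hV t₀ t₁ c F ξ hode hdec h0
end

section
/- Let h : ℝ → ℝ be given on an interval [0, T] by h(t) = h₀ + ḣ₀ t + ½ḧ₀ t², with T > 0. If h₀ ≤ 0 and h₀ + ḣ₀ T + ½ max(0, ḧ₀) T² ≤ 0, then h(t) ≤ 0 for all t ∈ [0, T]. -/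
open Set

/-- sampled CBF sufficient condition for a quadratic barrier. -/
theorem stmt5 (T h₀ hd₀ hdd₀ : ℝ) (hT : 0 < T)
    (h : ℝ → ℝ) (hh : ∀ t, h t = h₀ + hd₀ * t + (1 / 2) * hdd₀ * t ^ 2)
    (h1 : h₀ ≤ 0) (h2 : h₀ + hd₀ * T + (1 / 2) * max 0 hdd₀ * T ^ 2 ≤ 0) :
    ∀ t ∈ Icc (0 : ℝ) T, h t ≤ 0 := by
  intro t ht
  obtain ⟨ht0, htT⟩ := ht
  rw [hh]
  rcases le_or_gt hdd₀ 0 with hc | hc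
  · rw [max_eq_left hc] at h2
    nlinarith [mul_nonneg ht0 (sub_nonneg.2 htT), mul_nonneg ht0 ht0,
      mul_nonneg (mul_nonneg ht0 ht0) (neg_nonneg.2 hc)]
  · rw [max_eq_right hc.le] at h2
    nlinarith [mul_nonneg ht0 (sub_nonneg.2 htT), mul_nonneg (mul_nonneg ht0 (sub_nonneg.2 htT)) hc.le]
end
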